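/- Let A ∈ ℝ^{n×d}, W ∈ ℝ^{d×m}, and define F̃(S) = ‖AW‖²_F - min_{W̃} ‖AW - B_S W̃‖²_F for B ∈ ℝ^{n×d}. For any S ⊆ {1,...,d} and i ∉ S with r := b_i - proj_S(b_i) ≠ 0, the marginal gain satisfies F̃({i}|S) = ‖(AW)ᵀ (r/‖r‖)‖². Consequently, min_{‖z‖=1} ‖(AW)ᵀ z‖² ≤ F̃({i}|S) ≤ max_{‖z‖=1} ‖(AW)ᵀ z‖², i.e., every nonzero marginal gain lies between the smallest and largest squared singular values of AW. -/

import Mathlib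

/-!
Since the least-squares problem defining `F̃` decouples over the columns `c_q` of `AW`,
`F̃(S) = ∑_q ‖P_S c_q‖²`, where `P_S` is the orthogonal projection onto the span `K_S` of the
columns of `B` indexed by `S`. The minimality of `x` says `B x = P_S b_i`, so `r = b_i - P_S b_i`
is orthogonal to `K_S` and `K_{S ∪ {i}} = ℝ u ⊕ K_S` with `u = r / ‖r‖`. Hence
`P_{S ∪ {i}} = P_u + P_S`, and the gain is `∑_q ⟪u, c_q⟫² = ‖(AW)ᵀ u‖²`, one of the values whose
infimum and supremum over unit vectors are taken.
-/

/-- Squared Frobenius norm. -/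
noncomputable def frobSq {n m : ℕ} (M : Matrix (Fin n) (Fin m) ℝ) : ℝ :=
  ∑ p, ∑ q, (M p q) ^ 2

/-- Zero out the columns of `B` outside `S`. -/
def colZero {n d : ℕ} (B : Matrix (Fin n) (Fin d) ℝ) (S : Finset (Fin d)) :
    Matrix (Fin n) (Fin d) ℝ :=
  Matrix.of fun p j => if j ∈ S then B p j else 0

/-- `F̃ S = ‖AW‖²_F - min_{W̃} ‖AW - B_S W̃‖²_F`. -/
noncomputable def Ftil {n d m : ℕ} (A B : Matrix (Fin n) (Fin d) ℝ)
    (W : Matrix (Fin d) (Fin m) ℝ) (S : Finset (Fin d)) : ℝ :=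
  frobSq (A * W) -
    sInf {e : ℝ | ∃ Wt : Matrix (Fin d) (Fin m) ℝ, e = frobSq (A * W - colZero B S * Wt)}

open scoped RealInnerProductSpace

namespace Submodule

variable {E : Type*} [NormedAddCommGroup E] [InnerProductSpace ℝ E]

section

variable {K : Submodule ℝ E} [K.HasOrthogonalProjection]

theorem norm_sub_sq_eq_norm_sub_starProjection_sq_add {b v : E} (hv : v ∈ K) :
    ‖b - v‖ ^ 2 = ‖b - K.starProjection b‖ ^ 2 + ‖K.starProjection b - v‖ ^ 2 := by
  rw [← sub_add_sub_cancel b (K.starProjection b) v, norm_add_sq_real,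
    K.starProjection_inner_eq_zero b _ (K.sub_mem (K.starProjection_apply_mem b) hv)]
  ring

theorem eq_starProjection_of_forall_norm_sub_sq_le {b v₀ : E} (hv₀ : v₀ ∈ K)
    (h : ∀ v ∈ K, ‖b - v₀‖ ^ 2 ≤ ‖b - v‖ ^ 2) : K.starProjection b = v₀ := by
  have hmin := h _ (K.starProjection_apply_mem b)
  rw [norm_sub_sq_eq_norm_sub_starProjection_sq_add hv₀] at hmin
  rw [← sub_eq_zero, ← norm_eq_zero]
  nlinarith [norm_nonneg (K.starProjection b - v₀)]

end

theorem starProjection_sup_of_isOrtho {U K : Submodule ℝ E} [U.HasOrthogonalProjection]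
    [K.HasOrthogonalProjection] [(U ⊔ K).HasOrthogonalProjection] (h : U ⟂ K) (c : E) :
    (U ⊔ K).starProjection c = U.starProjection c + K.starProjection c := by
  refine eq_starProjection_of_mem_of_inner_eq_zero
    (add_mem (mem_sup_left (U.starProjection_apply_mem c))
      (mem_sup_right (K.starProjection_apply_mem c))) fun w hw => ?_
  obtain ⟨y, hy, z, hz, rfl⟩ := mem_sup.mp hw
  have hy0 : ⟪c - (U.starProjection c + K.starProjection c), y⟫ = 0 := by
    rw [← sub_sub, inner_sub_left, U.starProjection_inner_eq_zero c y hy,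
      h.symm.inner_eq (K.starProjection_apply_mem c) hy, sub_zero]
  have hz0 : ⟪c - (U.starProjection c + K.starProjection c), z⟫ = 0 := by
    rw [add_comm, ← sub_sub, inner_sub_left, K.starProjection_inner_eq_zero c z hz,
      h.inner_eq (U.starProjection_apply_mem c) hz, sub_zero]
  rw [inner_add_right, hy0, hz0, add_zero]

theorem norm_sq_starProjection_span_sup {K : Submodule ℝ E} [K.HasOrthogonalProjection]
    {u : E} [((ℝ ∙ u) ⊔ K).HasOrthogonalProjection] (hu : ‖u‖ = 1) (huK : u ∈ Kᗮ) (c : E) :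
    ‖((ℝ ∙ u) ⊔ K).starProjection c‖ ^ 2 = ⟪u, c⟫ ^ 2 + ‖K.starProjection c‖ ^ 2 := by
  have h : (ℝ ∙ u) ⟂ K := isOrtho_iff_le.mpr ((span_singleton_le_iff_mem _ _).mpr huK)
  rw [starProjection_sup_of_isOrtho h, norm_add_sq_real,
    h.inner_eq (starProjection_apply_mem _ c) (K.starProjection_apply_mem c),
    starProjection_unit_singleton ℝ hu, norm_smul, hu, mul_one, Real.norm_eq_abs, sq_abs]
  ring

theorem span_singleton_sup_eq_of_sub_smul_mem {K : Submodule ℝ E} {a u : E} {t : ℝ} (ht : t ≠ 0)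
    (h : a - t • u ∈ K) : (ℝ ∙ a) ⊔ K = (ℝ ∙ u) ⊔ K := by
  refine le_antisymm (sup_le ?_ le_sup_right) (sup_le ?_ le_sup_right) <;>
    rw [span_singleton_le_iff_mem]
  · simpa using add_mem (mem_sup_left (smul_mem _ t (mem_span_singleton_self u))) (mem_sup_right h)
  · have : u = t⁻¹ • a - t⁻¹ • (a - t • u) := by
      rw [smul_sub, smul_smul, inv_mul_cancel₀ ht, one_smul, sub_sub_cancel]
    rw [this]
    exact sub_mem (mem_sup_left (smul_mem _ _ (mem_span_singleton_self a)))
      (mem_sup_right (smul_mem _ _ h))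

end Submodule

open Matrix Submodule WithLp

variable {n d m : ℕ}

noncomputable def colVec (M : Matrix (Fin n) (Fin m) ℝ) (q : Fin m) : EuclideanSpace ℝ (Fin n) :=
  toLp 2 (M.col q)

theorem frobSq_eq_sum_norm_sq_colVec (M : Matrix (Fin n) (Fin m) ℝ) :
    frobSq M = ∑ q, ‖colVec M q‖ ^ 2 := by
  simp [frobSq, Finset.sum_comm (γ := Fin n), EuclideanSpace.real_norm_sq_eq, colVec]

theorem colVec_sub (M N : Matrix (Fin n) (Fin m) ℝ) (q : Fin m) :
    colVec (M - N) q = colVec M q - colVec N q :=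
  rfl

theorem colVec_mul (X : Matrix (Fin n) (Fin d) ℝ) (Y : Matrix (Fin d) (Fin m) ℝ) (q : Fin m) :
    colVec (X * Y) q = toLpLin 2 2 X (colVec Y q) := by
  ext p
  simp [colVec, toLpLin_apply, mul_apply, mulVec, dotProduct]

theorem inner_toLp_colVec (M : Matrix (Fin n) (Fin m) ℝ) (z : Fin n → ℝ) (q : Fin m) :
    ⟪toLp 2 z, colVec M q⟫ = ∑ p, M p q * z p := by
  simp [colVec, PiLp.inner_apply]

theorem isLeast_frobSq_sub_mul (M : Matrix (Fin n) (Fin m) ℝ) (X : Matrix (Fin n) (Fin d) ℝ) :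
    IsLeast {e | ∃ Y : Matrix (Fin d) (Fin m) ℝ, e = frobSq (M - X * Y)}
      (∑ q, ‖colVec M q - (LinearMap.range (toLpLin 2 2 X)).starProjection (colVec M q)‖ ^ 2) := by
  set K := LinearMap.range (toLpLin 2 2 X)
  constructor
  · choose y hy using fun q => LinearMap.mem_range.mp (K.starProjection_apply_mem (colVec M q))
    refine ⟨Matrix.of fun j q => y q j, ?_⟩
    rw [frobSq_eq_sum_norm_sq_colVec]
    refine Finset.sum_congr rfl fun q _ => ?_
    rw [colVec_sub, colVec_mul, ← hy q]
    rfl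
  · rintro _ ⟨Y, rfl⟩
    rw [frobSq_eq_sum_norm_sq_colVec]
    refine Finset.sum_le_sum fun q _ => ?_
    rw [colVec_sub, colVec_mul, norm_sub_sq_eq_norm_sub_starProjection_sq_add
      (LinearMap.mem_range_self _ _)]
    exact le_add_of_nonneg_right (sq_nonneg _)

theorem toLp_mulVec_eq_sum_of_support {B : Matrix (Fin n) (Fin d) ℝ} {S : Finset (Fin d)}
    {y : Fin d → ℝ} (hy : ∀ j ∉ S, y j = 0) : toLp 2 (B *ᵥ y) = ∑ j ∈ S, y j • colVec B j := by
  rw [mulVec_eq_sum, ← Finset.sum_subset (Finset.subset_univ S) fun j _ hj => by simp [hy j hj]]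
  ext p
  simp [colVec, mul_comm]

theorem colZero_mulVec (B : Matrix (Fin n) (Fin d) ℝ) (S : Finset (Fin d)) (y : Fin d → ℝ) :
    colZero B S *ᵥ y = B *ᵥ fun j => if j ∈ S then y j else 0 := by
  ext p
  simp only [mulVec, dotProduct, colZero, of_apply, ite_mul, zero_mul, mul_ite, mul_zero]

theorem mem_span_colVec_image_iff {B : Matrix (Fin n) (Fin d) ℝ} {S : Finset (Fin d)}
    {v : EuclideanSpace ℝ (Fin n)} :
    v ∈ span ℝ (colVec B '' S) ↔ ∃ y : Fin d → ℝ, (∀ j ∉ S, y j = 0) ∧ toLp 2 (B *ᵥ y) = v := by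
  classical
  rw [mem_span_image_finset_iff_exists_fun']
  constructor
  · rintro ⟨c, rfl⟩
    refine ⟨fun j => if j ∈ S then c j else 0, fun j hj => if_neg hj, ?_⟩
    rw [toLp_mulVec_eq_sum_of_support fun j hj => if_neg hj]
    exact Finset.sum_congr rfl fun j hj => by rw [if_pos hj]
  · rintro ⟨y, hy, rfl⟩
    exact ⟨y, (toLp_mulVec_eq_sum_of_support hy).symm⟩

theorem range_toLpLin_colZero (B : Matrix (Fin n) (Fin d) ℝ) (S : Finset (Fin d)) :
    LinearMap.range (toLpLin 2 2 (colZero B S)) = span ℝ (colVec B '' S) := by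
  ext v
  rw [LinearMap.mem_range, mem_span_colVec_image_iff]
  constructor
  · rintro ⟨y, rfl⟩
    exact ⟨_, fun j hj => if_neg hj, by rw [toLpLin_apply, colZero_mulVec]⟩
  · rintro ⟨y, hy, rfl⟩
    refine ⟨toLp 2 y, ?_⟩
    rw [toLpLin_apply, colZero_mulVec]
    congr 3 with j
    split_ifs with hj
    · rfl
    · exact (hy j hj).symm

theorem Ftil_eq_sum_norm_sq_starProjection (A B : Matrix (Fin n) (Fin d) ℝ)
    (W : Matrix (Fin d) (Fin m) ℝ) (S : Finset (Fin d)) :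
    Ftil A B W S = ∑ q, ‖(span ℝ (colVec B '' S)).starProjection (colVec (A * W) q)‖ ^ 2 := by
  rw [Ftil, (isLeast_frobSq_sub_mul _ _).csInf_eq]
  simp only [range_toLpLin_colZero]
  rw [frobSq_eq_sum_norm_sq_colVec, ← Finset.sum_sub_distrib]
  refine Finset.sum_congr rfl fun q _ => ?_
  have hpyth := norm_sub_sq_eq_norm_sub_starProjection_sq_add (b := colVec (A * W) q)
    (zero_mem (span ℝ (colVec B '' S)))
  rw [sub_zero, sub_zero] at hpyth
  linarith

theorem Ftil_insert_sub_Ftil (A : Matrix (Fin n) (Fin d) ℝ) (W : Matrix (Fin d) (Fin m) ℝ)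
    {B : Matrix (Fin n) (Fin d) ℝ} {S : Finset (Fin d)} {i : Fin d} {r : EuclideanSpace ℝ (Fin n)}
    (hr : r = colVec B i - (span ℝ (colVec B '' S)).starProjection (colVec B i)) (hr0 : r ≠ 0) :
    Ftil A B W (insert i S) - Ftil A B W S = ∑ q, ⟪‖r‖⁻¹ • r, colVec (A * W) q⟫ ^ 2 := by
  set K := span ℝ (colVec B '' S)
  have hu : ‖‖r‖⁻¹ • r‖ = 1 := norm_smul_inv_norm hr0
  have hrK : ‖r‖⁻¹ • r ∈ Kᗮ := smul_mem _ _ (hr ▸ K.sub_starProjection_mem_orthogonal _)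
  have hspan : span ℝ (colVec B '' ↑(insert i S)) = (ℝ ∙ ‖r‖⁻¹ • r) ⊔ K := by
    rw [Finset.coe_insert, Set.image_insert_eq, span_insert]
    refine span_singleton_sup_eq_of_sub_smul_mem (norm_ne_zero_iff.mpr hr0) ?_
    rw [smul_smul, mul_inv_cancel₀ (norm_ne_zero_iff.mpr hr0), one_smul, hr, sub_sub_cancel]
    exact K.starProjection_apply_mem _
  simp only [Ftil_eq_sum_norm_sq_starProjection, hspan, ← Finset.sum_sub_distrib]
  refine Finset.sum_congr rfl fun q _ => ?_
  rw [norm_sq_starProjection_span_sup hu hrK, add_sub_cancel_right]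

theorem sInf_le_and_le_sSup_of_sum_sq_eq_one (M : Matrix (Fin n) (Fin m) ℝ) {z : Fin n → ℝ}
    (hz : ∑ p, z p ^ 2 = 1) :
    sInf {e : ℝ | ∃ z : Fin n → ℝ, (∑ p, z p ^ 2) = 1 ∧ e = ∑ q, (∑ p, M p q * z p) ^ 2} ≤
        ∑ q, (∑ p, M p q * z p) ^ 2 ∧
      ∑ q, (∑ p, M p q * z p) ^ 2 ≤
        sSup {e : ℝ | ∃ z : Fin n → ℝ, (∑ p, z p ^ 2) = 1 ∧ e = ∑ q, (∑ p, M p q * z p) ^ 2} := by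
  have hmem : ∑ q, (∑ p, M p q * z p) ^ 2 ∈
      {e : ℝ | ∃ z : Fin n → ℝ, (∑ p, z p ^ 2) = 1 ∧ e = ∑ q, (∑ p, M p q * z p) ^ 2} :=
    ⟨z, hz, rfl⟩
  refine ⟨csInf_le ⟨0, ?_⟩ hmem, le_csSup ⟨frobSq M, ?_⟩ hmem⟩
  · rintro _ ⟨w, -, rfl⟩
    positivity
  · rintro _ ⟨w, hw, rfl⟩
    calc ∑ q, (∑ p, M p q * w p) ^ 2
        ≤ ∑ q, (∑ p, M p q ^ 2) * ∑ p, w p ^ 2 :=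
          Finset.sum_le_sum fun q _ => Finset.sum_mul_sq_le_sq_mul_sq _ _ _
      _ = frobSq M := by rw [hw, frobSq, Finset.sum_comm]; simp

theorem stmt13_general {n d m : ℕ} (A B : Matrix (Fin n) (Fin d) ℝ)
    (W : Matrix (Fin d) (Fin m) ℝ)
    (S : Finset (Fin d)) (i : Fin d)
    (x : Fin d → ℝ) (hx0 : ∀ j ∉ S, x j = 0)
    (hx : ∀ x' : Fin d → ℝ, (∀ j ∉ S, x' j = 0) →
      ∑ p, (B p i - B.mulVec x p) ^ 2 ≤ ∑ p, (B p i - B.mulVec x' p) ^ 2)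
    (hr : (fun p => B p i - B.mulVec x p) ≠ 0) :
    Ftil A B W (insert i S) - Ftil A B W S =
      (∑ q, (∑ p, (A * W) p q *
        ((B p i - B.mulVec x p) / Real.sqrt (∑ p', (B p' i - B.mulVec x p') ^ 2))) ^ 2) ∧
    sInf {e : ℝ | ∃ z : Fin n → ℝ, (∑ p, z p ^ 2) = 1 ∧
        e = ∑ q, (∑ p, (A * W) p q * z p) ^ 2} ≤
      Ftil A B W (insert i S) - Ftil A B W S ∧
    Ftil A B W (insert i S) - Ftil A B W S ≤
      sSup {e : ℝ | ∃ z : Fin n → ℝ, (∑ p, z p ^ 2) = 1 ∧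
        e = ∑ q, (∑ p, (A * W) p q * z p) ^ 2} := by
  set r : EuclideanSpace ℝ (Fin n) := toLp 2 fun p => B p i - (B *ᵥ x) p
  have hproj : (span ℝ (colVec B '' S)).starProjection (colVec B i) = toLp 2 (B *ᵥ x) := by
    refine eq_starProjection_of_forall_norm_sub_sq_le
      (mem_span_colVec_image_iff.mpr ⟨x, hx0, rfl⟩) fun v hv => ?_
    obtain ⟨y, hy, rfl⟩ := mem_span_colVec_image_iff.mp hv
    simpa [EuclideanSpace.real_norm_sq_eq, colVec] using hx y hy
  have hr0 : r ≠ 0 := fun h => hr (congrArg ofLp h)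
  have hunit : ‖r‖⁻¹ • r =
      toLp 2 fun p => (B p i - (B *ᵥ x) p) / √(∑ p', (B p' i - (B *ᵥ x) p') ^ 2) := by
    ext p
    simp [r, EuclideanSpace.norm_eq, div_eq_inv_mul]
  have hgain : Ftil A B W (insert i S) - Ftil A B W S =
      ∑ q, (∑ p, (A * W) p q *
        ((B p i - (B *ᵥ x) p) / √(∑ p', (B p' i - (B *ᵥ x) p') ^ 2))) ^ 2 := by
    rw [Ftil_insert_sub_Ftil A W (by rw [hproj]; rfl) hr0, hunit]
    simp only [inner_toLp_colVec]
  have hz : ∑ p, ((B p i - (B *ᵥ x) p) / √(∑ p', (B p' i - (B *ᵥ x) p') ^ 2)) ^ 2 = 1 := by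
    rw [← EuclideanSpace.real_norm_sq_eq (toLp 2 _), ← hunit,
      show ‖‖r‖⁻¹ • r‖ = 1 from norm_smul_inv_norm hr0, one_pow]
  exact ⟨hgain, hgain ▸ sInf_le_and_le_sSup_of_sum_sq_eq_one (A * W) hz⟩

/-- When the residual `r = b_i - proj_S(b_i)` is nonzero, the marginal gain
equals `‖(AW)ᵀ (r/‖r‖)‖²` and hence lies between the smallest and the largest
squared singular values of `AW`. -/
theorem stmt13 {n d m : ℕ} (A B : Matrix (Fin n) (Fin d) ℝ)
    (W : Matrix (Fin d) (Fin m) ℝ)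
    (S : Finset (Fin d)) (i : Fin d) (hi : i ∉ S)
    (x : Fin d → ℝ) (hx0 : ∀ j ∉ S, x j = 0)
    (hx : ∀ x' : Fin d → ℝ, (∀ j ∉ S, x' j = 0) →
      ∑ p, (B p i - B.mulVec x p) ^ 2 ≤ ∑ p, (B p i - B.mulVec x' p) ^ 2)
    (hr : (fun p => B p i - B.mulVec x p) ≠ 0) :
    Ftil A B W (insert i S) - Ftil A B W S =
      (∑ q, (∑ p, (A * W) p q *
        ((B p i - B.mulVec x p) / Real.sqrt (∑ p', (B p' i - B.mulVec x p') ^ 2))) ^ 2) ∧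
    sInf {e : ℝ | ∃ z : Fin n → ℝ, (∑ p, z p ^ 2) = 1 ∧
        e = ∑ q, (∑ p, (A * W) p q * z p) ^ 2} ≤
      Ftil A B W (insert i S) - Ftil A B W S ∧
    Ftil A B W (insert i S) - Ftil A B W S ≤
      sSup {e : ℝ | ∃ z : Fin n → ℝ, (∑ p, z p ^ 2) = 1 ∧
        e = ∑ q, (∑ p, (A * W) p q * z p) ^ 2} :=
  stmt13_general A B W S i x hx0 hx hr
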